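/- arXiv:1005.3361 — 7 statements merged into one kernel-verified Lean document; each statement's English description precedes it below -/
import Mathlib

section
/- For every integer n ≥ 2, n - 1 + (2n - 3)! / ((n - 2)! (n - 1)!) > 2^(n-2). Consequently, any upper bound for the projective dimension of an ideal with N generators of degree N must be at least 2^(N-2). -/
lemma aux_choose (m : ℕ) : 2 ^ m ≤ Nat.choose (2 * m + 1) m := by
  induction m with
  | zero => simp
  | succ k ih =>
    have h1 : Nat.choose (2 * k + 2) (k + 1) = 2 * Nat.choose (2 * k + 1) k := by
      have hs : Nat.choose (2 * k + 1) (k + 1) = Nat.choose (2 * k + 1) k := by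
        have := Nat.choose_symm (n := 2 * k + 1) (k := k + 1) (by omega)
        have he : 2 * k + 1 - (k + 1) = k := by omega
        rw [he] at this
        omega
      have ht : Nat.choose (2 * k + 2) (k + 1) =
          Nat.choose (2 * k + 1) k + Nat.choose (2 * k + 1) (k + 1) :=
        Nat.choose_succ_succ (2 * k + 1) k
      omega
    have h2 : Nat.choose (2 * k + 2) (k + 1) ≤ Nat.choose (2 * (k + 1) + 1) (k + 1) :=
      Nat.choose_le_choose _ (by omega)
    calc 2 ^ (k + 1) = 2 * 2 ^ k := by ring
    _ ≤ 2 * Nat.choose (2 * k + 1) k := by omega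
    _ = Nat.choose (2 * k + 2) (k + 1) := h1.symm
    _ ≤ _ := h2

/-- For every integer `n ≥ 2`, `n - 1 + (2n - 3)! / ((n - 2)! (n - 1)!) > 2 ^ (n - 2)`.
Consequently any upper bound for the projective dimension of an ideal with `N`
generators of degree `N` must be at least `2 ^ (N - 2)`. -/
theorem pd_lower_bound (n : ℕ) (hn : 2 ≤ n) :
    n - 1 + Nat.factorial (2 * n - 3) / (Nat.factorial (n - 2) * Nat.factorial (n - 1))
      > 2 ^ (n - 2) := by
  have hle : n - 2 ≤ 2 * n - 3 := by omega
  have hc := Nat.choose_eq_factorial_div_factorial hle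
  have he : 2 * n - 3 - (n - 2) = n - 1 := by omega
  rw [he] at hc
  have hb := aux_choose (n - 2)
  have h3 : 2 * (n - 2) + 1 = 2 * n - 3 := by omega
  rw [h3] at hb
  rw [← hc]
  omega
end

section
/- Let K be a field, R = K[X_1, X_2, Y_1, Y_2, Y_3], and I = (X_1^3, X_2^3, X_1^2 Y_1 + X_1 X_2 Y_2 + X_2^2 Y_3). Let T = X_1^2 X_2^2. Then T ∉ I, but T·v ∈ I for every variable v ∈ {X_1, X_2, Y_1, Y_2, Y_3}; hence the colon ideal (I : T) equals the maximal graded ideal (X_1, X_2, Y_1, Y_2, Y_3). -/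
open MvPolynomial

lemma Tnotin (K : Type*) [Field K] :
    (X 0 ^ 2 * X 1 ^ 2 : MvPolynomial (Fin 5) K) ∉ Ideal.span
      {X 0 ^ 3, X 1 ^ 3, X 0 ^ 2 * X 2 + X 0 * X 1 * X 3 + X 1 ^ 2 * X 4} := by
  intro h
  rw [Ideal.mem_span_insert] at h
  obtain ⟨u, z, hz, heq⟩ := h
  rw [Ideal.mem_span_insert] at hz
  obtain ⟨v, w, hw, heq2⟩ := hz
  rw [Ideal.mem_span_singleton] at hw
  obtain ⟨t, ht⟩ := hw
  subst heq2 ht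
  have := congrArg (coeff (Finsupp.single 0 2 + Finsupp.single 1 2)) heq
  simp only [X_pow_eq_monomial, coeff_add, X, monomial_mul, monomial_pow, mul_add,
    coeff_mul_monomial', coeff_monomial_mul', add_mul, mul_one, one_mul, one_pow,
    Finsupp.smul_single, smul_eq_mul, mul_comm] at this
  rw [if_neg (fun hle => by simpa using Finsupp.le_def.mp hle 0),
      if_neg (fun hle => by simpa using Finsupp.le_def.mp hle 1),
      if_neg (fun hle => by simpa using Finsupp.le_def.mp hle 2),
      if_neg (fun hle => by simpa using Finsupp.le_def.mp hle 3),
      if_neg (fun hle => by simpa using Finsupp.le_def.mp hle 4),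
      coeff_monomial, if_pos rfl] at this
  simp at this


lemma Tmul (K : Type*) [Field K] (v : Fin 5) :
    (X 0 ^ 2 * X 1 ^ 2 : MvPolynomial (Fin 5) K) * X v ∈ Ideal.span
      {X 0 ^ 3, X 1 ^ 3, X 0 ^ 2 * X 2 + X 0 * X 1 * X 3 + X 1 ^ 2 * X 4} := by
  set I : Ideal (MvPolynomial (Fin 5) K) := Ideal.span
      {X 0 ^ 3, X 1 ^ 3, X 0 ^ 2 * X 2 + X 0 * X 1 * X 3 + X 1 ^ 2 * X 4} with hI
  have h1 : (X 0 ^ 3 : MvPolynomial (Fin 5) K) ∈ I := Ideal.subset_span (by simp)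
  have h2 : (X 1 ^ 3 : MvPolynomial (Fin 5) K) ∈ I := Ideal.subset_span (by simp)
  have h3 : (X 0 ^ 2 * X 2 + X 0 * X 1 * X 3 + X 1 ^ 2 * X 4 : MvPolynomial (Fin 5) K) ∈ I :=
    Ideal.subset_span (by simp)
  fin_cases v
  · show (X 0 ^ 2 * X 1 ^ 2 : MvPolynomial (Fin 5) K) * X 0 ∈ I
    have : (X 0 ^ 2 * X 1 ^ 2 : MvPolynomial (Fin 5) K) * X 0 = X 1 ^ 2 * X 0 ^ 3 := by ring
    rw [this]; exact I.mul_mem_left _ h1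
  · show (X 0 ^ 2 * X 1 ^ 2 : MvPolynomial (Fin 5) K) * X 1 ∈ I
    have : (X 0 ^ 2 * X 1 ^ 2 : MvPolynomial (Fin 5) K) * X 1 = X 0 ^ 2 * X 1 ^ 3 := by ring
    rw [this]; exact I.mul_mem_left _ h2
  · show (X 0 ^ 2 * X 1 ^ 2 : MvPolynomial (Fin 5) K) * X 2 ∈ I
    have : (X 0 ^ 2 * X 1 ^ 2 : MvPolynomial (Fin 5) K) * X 2 =
        X 1 ^ 2 * (X 0 ^ 2 * X 2 + X 0 * X 1 * X 3 + X 1 ^ 2 * X 4)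
          - (X 0 * X 3 + X 1 * X 4) * X 1 ^ 3 := by ring
    rw [this]; exact sub_mem (I.mul_mem_left _ h3) (I.mul_mem_left _ h2)
  · show (X 0 ^ 2 * X 1 ^ 2 : MvPolynomial (Fin 5) K) * X 3 ∈ I
    have : (X 0 ^ 2 * X 1 ^ 2 : MvPolynomial (Fin 5) K) * X 3 =
        X 0 * X 1 * (X 0 ^ 2 * X 2 + X 0 * X 1 * X 3 + X 1 ^ 2 * X 4)
          - X 1 * X 2 * X 0 ^ 3 - X 0 * X 4 * X 1 ^ 3 := by ring
    rw [this]
    exact sub_mem (sub_mem (I.mul_mem_left _ h3) (I.mul_mem_left _ h1)) (I.mul_mem_left _ h2)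
  · show (X 0 ^ 2 * X 1 ^ 2 : MvPolynomial (Fin 5) K) * X 4 ∈ I
    have : (X 0 ^ 2 * X 1 ^ 2 : MvPolynomial (Fin 5) K) * X 4 =
        X 0 ^ 2 * (X 0 ^ 2 * X 2 + X 0 * X 1 * X 3 + X 1 ^ 2 * X 4)
          - (X 2 * X 0 + X 1 * X 3) * X 0 ^ 3 := by ring
    rw [this]; exact sub_mem (I.mul_mem_left _ h3) (I.mul_mem_left _ h1)

open MvPolynomial in
/-- In `R = K[X₁,X₂,Y₁,Y₂,Y₃]` with
`I = (X₁³, X₂³, X₁²Y₁ + X₁X₂Y₂ + X₂²Y₃)` and `T = X₁²X₂²`: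
`T ∉ I`, `T·v ∈ I` for every variable `v`, and the colon ideal `(I : T)`
equals the maximal graded ideal `(X₁,X₂,Y₁,Y₂,Y₃)`. -/
theorem three_cubics_colon (K : Type*) [Field K] :
    let R := MvPolynomial (Fin 5) K
    let I : Ideal R := Ideal.span
      {X 0 ^ 3, X 1 ^ 3, X 0 ^ 2 * X 2 + X 0 * X 1 * X 3 + X 1 ^ 2 * X 4}
    let T : R := X 0 ^ 2 * X 1 ^ 2
    T ∉ I ∧ (∀ v : Fin 5, T * X v ∈ I) ∧
      Submodule.colon I (Ideal.span {T}) = Ideal.span (Set.range X) := by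
  intro R I T
  refine ⟨Tnotin K, Tmul K, le_antisymm ?_ ?_⟩
  · intro r hr
    have hr' : r * T ∈ I := by
      simpa using Submodule.mem_colon.mp hr T (Ideal.subset_span rfl)
    set c := constantCoeff r with hc
    have hrange : Set.range (X : Fin 5 → R) = X '' Set.univ := by rw [Set.image_univ]
    have hq : r - C c ∈ Ideal.span (Set.range (X : Fin 5 → R)) := by
      rw [hrange, mem_ideal_span_X_image]
      intro m hm
      by_contra hcon
      push_neg at hcon
      have hm0 : m = 0 := Finsupp.ext fun i => by simpa using hcon i
      rw [mem_support_iff, hm0] at hm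
      apply hm
      simp [← constantCoeff_eq, hc]
    have hqT : (r - C c) * T ∈ I := by
      refine Submodule.span_induction (p := fun q _ => q * T ∈ I) ?_ ?_ ?_ ?_ hq
      · rintro _ ⟨v, rfl⟩
        rw [mul_comm]; exact Tmul K v
      · simp
      · intro a b _ _ ha hb; rw [add_mul]; exact add_mem ha hb
      · intro a b _ hb; rw [smul_eq_mul, mul_assoc]; exact I.mul_mem_left _ hb
    have hcT : C c * T ∈ I := by
      have : C c * T = r * T - (r - C c) * T := by ring
      rw [this]; exact sub_mem hr' hqT
    by_cases hc0 : c = 0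
    · simpa [hc0] using hq
    · exfalso
      apply Tnotin K
      show T ∈ I
      have : (T : R) = C c⁻¹ * (C c * T) := by
        rw [← mul_assoc, ← C_mul, inv_mul_cancel₀ hc0, C_1, one_mul]
      rw [this]; exact I.mul_mem_left _ hcT
  · rw [Ideal.span_le]
    rintro _ ⟨v, rfl⟩
    rw [SetLike.mem_coe]
    refine Submodule.mem_colon.mpr fun p hp => ?_
    obtain ⟨a, rfl⟩ := Ideal.mem_span_singleton'.mp hp
    have : (X v : R) • (a * T) = a * (T * X v) := by rw [smul_eq_mul]; ring
    rw [this]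
    exact I.mul_mem_left a (Tmul K v)
end

section
/- Let K be a field, R = K[X_1, X_2, Y_1, Y_2, Y_3], and I = (X_1^3, X_2^3, X_1^2 Y_1 + X_1 X_2 Y_2 + X_2^2 Y_3). Then the maximal graded ideal m = (X_1, X_2, Y_1, Y_2, Y_3) is an associated prime of R/I, i.e., m = Ann_R(t) for some nonzero t ∈ R/I. -/
/-!
The witness is `T = X₀²X₁²`. Multiplying `T` by any variable lands in `I`: for `X₀` and `X₁` this
is a multiple of `X₀³` or `X₁³`, and for the `Yⱼ` the cubic `X₀²Y₁ + X₀X₁Y₂ + X₁²Y₃` times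
`X₁²`, `X₀X₁` or `X₀²` reduces to `X₁²X₀²Yⱼ` modulo `X₀³, X₁³`. Conversely, `I` is contained in
the monomial ideal generated by all terms of its three generators, and none of these terms
divides `T`. So if `rT ∈ I`, the coefficient of `T` in `rT`, which is the constant term of `r`,
vanishes, i.e. `r ∈ m`.
-/

open MvPolynomial

namespace MvPolynomial

variable {σ R : Type*} [CommSemiring R]

theorem idealOfVars_eq_ker_constantCoeff :
    idealOfVars σ R = RingHom.ker (constantCoeff : MvPolynomial σ R →+* R) := by
  ext p
  rw [← pow_one (idealOfVars σ R), mem_pow_idealOfVars_iff', RingHom.mem_ker]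
  simp [Finsupp.degree_eq_zero_iff, constantCoeff_eq]

theorem isPrime_idealOfVars [IsDomain R] : (idealOfVars σ R).IsPrime :=
  idealOfVars_eq_ker_constantCoeff (σ := σ) (R := R) ▸ RingHom.ker_isPrime _

theorem constantCoeff_eq_zero_of_monomial_mul_mem_span_monomial {s : Set (σ →₀ ℕ)}
    {m : σ →₀ ℕ} (hm : ∀ si ∈ s, ¬si ≤ m) {p : MvPolynomial σ R}
    (hp : monomial m 1 * p ∈ Ideal.span ((fun s => monomial s (1 : R)) '' s)) :
    constantCoeff p = 0 := by
  by_contra hp0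
  have hmem : m ∈ (monomial m 1 * p).support := by
    rwa [mem_support_iff, coeff_monomial_mul', if_pos le_rfl, tsub_self, one_mul,
      ← constantCoeff_eq]
  obtain ⟨si, hsi, hle⟩ := mem_ideal_span_monomial_image.mp hp m hmem
  exact hm si hsi hle

end MvPolynomial

theorem Ideal.mem_colon_bot_mk_iff {R : Type*} [CommRing R] {I : Ideal R} {x r : R} :
    r ∈ (⊥ : Submodule R (R ⧸ I)).colon {Ideal.Quotient.mk I x} ↔ r * x ∈ I := by
  rw [Submodule.mem_colon_singleton, Submodule.mem_bot, Algebra.smul_def,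
    Ideal.Quotient.algebraMap_eq, ← map_mul, Ideal.Quotient.eq_zero_iff_mem]

namespace ThreeCubics

variable (K : Type*) [Field K]

noncomputable abbrev ideal : Ideal (MvPolynomial (Fin 5) K) :=
  Ideal.span {X 0 ^ 3, X 1 ^ 3, X 0 ^ 2 * X 2 + X 0 * X 1 * X 3 + X 1 ^ 2 * X 4}

/-- The exponents of the terms of the three generators of `ideal K`. -/
noncomputable abbrev termExponents : Set (Fin 5 →₀ ℕ) :=
  {.single 0 3, .single 1 3, .single 0 2 + .single 2 1,
    .single 0 1 + .single 1 1 + .single 3 1, .single 1 2 + .single 4 1}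

theorem X_mul_mem_ideal (i : Fin 5) : X i * (X 0 ^ 2 * X 1 ^ 2) ∈ ideal K := by
  rw [Submodule.mem_span_triple]
  simp only [smul_eq_mul]
  fin_cases i <;> simp only [Fin.reduceFinMk]
  · exact ⟨X 1 ^ 2, 0, 0, by ring⟩
  · exact ⟨0, X 0 ^ 2, 0, by ring⟩
  · exact ⟨0, -(X 0 * X 3 + X 1 * X 4), X 1 ^ 2, by ring⟩
  · exact ⟨-(X 1 * X 2), -(X 0 * X 4), X 0 * X 1, by ring⟩
  · exact ⟨-(X 0 * X 2 + X 1 * X 3), 0, X 0 ^ 2, by ring⟩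

theorem ideal_le_span_monomial_termExponents :
    ideal K ≤ Ideal.span ((fun s => monomial s (1 : K)) '' termExponents) := by
  have hX (i : Fin 5) : (X i : MvPolynomial (Fin 5) K) = monomial (.single i 1) 1 := rfl
  have mem : ∀ s ∈ termExponents,
      monomial s (1 : K) ∈ Ideal.span ((fun s => monomial s (1 : K)) '' termExponents) :=
    fun s hs => Ideal.subset_span ⟨s, hs, rfl⟩
  rw [Ideal.span_le]
  simp only [Set.insert_subset_iff, Set.singleton_subset_iff, SetLike.mem_coe, X_pow_eq_monomial]
  simp only [hX, monomial_mul, one_mul]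
  exact ⟨mem _ (by simp), mem _ (by simp),
    add_mem (add_mem (mem _ (by simp)) (mem _ (by simp))) (mem _ (by simp))⟩

theorem not_le_of_mem_termExponents :
    ∀ s ∈ termExponents, ¬s ≤ .single 0 2 + .single 1 2 := by
  simp only [Set.mem_insert_iff, Set.mem_singleton_iff, forall_eq_or_imp, forall_eq,
    Finsupp.le_def, not_forall]
  exact ⟨⟨0, by simp⟩, ⟨1, by simp⟩, ⟨2, by simp⟩, ⟨3, by simp⟩, ⟨4, by simp⟩⟩

end ThreeCubics

open MvPolynomial in
open ThreeCubics in
/-- In `R = K[X₁,X₂,Y₁,Y₂,Y₃]` with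
`I = (X₁³, X₂³, X₁²Y₁ + X₁X₂Y₂ + X₂²Y₃)`, the maximal graded ideal
`m = (X₁,X₂,Y₁,Y₂,Y₃)` is an associated prime of `R/I`, i.e. `m = Ann_R(t)`
for some nonzero `t ∈ R/I`. -/
theorem three_cubics_assoc_prime (K : Type*) [Field K] :
    let R := MvPolynomial (Fin 5) K
    let I : Ideal R := Ideal.span
      {X 0 ^ 3, X 1 ^ 3, X 0 ^ 2 * X 2 + X 0 * X 1 * X 3 + X 1 ^ 2 * X 4}
    IsAssociatedPrime (Ideal.span (Set.range X) : Ideal R) (R ⧸ I) := by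
  intro R I
  change IsAssociatedPrime (idealOfVars (Fin 5) K) (R ⧸ ideal K)
  refine isAssociatedPrime_iff.mpr
    ⟨isPrime_idealOfVars, Ideal.Quotient.mk _ (X 0 ^ 2 * X 1 ^ 2), le_antisymm ?_ fun r hr => ?_⟩
  · rw [Ideal.span_le, Set.range_subset_iff]
    exact fun i => Ideal.mem_colon_bot_mk_iff.mpr (X_mul_mem_ideal K i)
  · have hT : (X 0 ^ 2 * X 1 ^ 2 : R) = monomial (.single 0 2 + .single 1 2) 1 := by
      rw [X_pow_eq_monomial, X_pow_eq_monomial, monomial_mul, one_mul]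
    rw [Ideal.mem_colon_bot_mk_iff, mul_comm, hT] at hr
    rw [idealOfVars_eq_ker_constantCoeff, RingHom.mem_ker]
    exact constantCoeff_eq_zero_of_monomial_mul_mem_span_monomial
      not_le_of_mem_termExponents (ideal_le_span_monomial_termExponents K hr)
end

section
/- Let K be a field, R = K[X_1, X_2, Y_1, Y_2, Y_3], and I = (X_1^3, X_2^3, X_1^2 Y_1 + X_1 X_2 Y_2 + X_2^2 Y_3). Then the depth of R/I with respect to the maximal graded ideal m = (X_1, X_2, Y_1, Y_2, Y_3) is zero; equivalently, every element of m is a zerodivisor on R/I. -/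
/-!
The monomial `w = X₁²X₂²` lies in the socle of `R/I`: `w ∉ I`, because `I` lies in the monomial ideal
`(X₁³, X₂³, Y₁, Y₂, Y₃)`, which contains no divisor of `w`; and each variable times `w` lies in `I`,
explicitly as a combination of the three generators. So the class of `w` is a nonzero element of
`R/I` killed by `m`, i.e. `m` is an associated prime of `R/I`.
-/

namespace Ideal

variable {A : Type*} [CommRing A]

theorem nontrivial_quotient_and_exists_smul_eq_zero_of_le_colon {I m : Ideal A} {w : A}
    (hw : w ∉ I) (hm : m ≤ I.colon {w}) :
    Nontrivial (A ⧸ I) ∧ ∀ r ∈ m, ∃ t : A ⧸ I, t ≠ 0 ∧ r • t = 0 := by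
  have hw0 : Quotient.mk I w ≠ 0 := by rwa [ne_eq, Quotient.eq_zero_iff_mem]
  refine ⟨⟨_, 0, hw0⟩, fun r hr => ⟨_, hw0, ?_⟩⟩
  rw [Algebra.smul_def, Quotient.algebraMap_eq, ← map_mul, Quotient.eq_zero_iff_mem]
  exact Submodule.mem_colon_singleton.mp (hm hr)

theorem mul_add_mul_add_mul_mem_span_triple (f g h a b c : A) :
    f * a + g * b + h * c ∈ span {f, g, h} :=
  add_mem (add_mem (mul_mem_right _ _ (subset_span (by simp)))
    (mul_mem_right _ _ (subset_span (by simp)))) (mul_mem_right _ _ (subset_span (by simp)))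

end Ideal

open Ideal

section ThreeCubics

variable {A : Type*} [CommRing A]

def threeCubics (x₁ x₂ y₁ y₂ y₃ : A) : Ideal A :=
  span {x₁ ^ 3, x₂ ^ 3, x₁ ^ 2 * y₁ + x₁ * x₂ * y₂ + x₂ ^ 2 * y₃}

theorem span_le_threeCubics_colon (x₁ x₂ y₁ y₂ y₃ : A) :
    span {x₁, x₂, y₁, y₂, y₃} ≤ (threeCubics x₁ x₂ y₁ y₂ y₃).colon {x₁ ^ 2 * x₂ ^ 2} := by
  have hcomb := mul_add_mul_add_mul_mem_span_triple
    (x₁ ^ 3) (x₂ ^ 3) (x₁ ^ 2 * y₁ + x₁ * x₂ * y₂ + x₂ ^ 2 * y₃)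
  refine span_le.mpr fun z hz => Submodule.mem_colon_singleton.mpr ?_
  rw [smul_eq_mul, threeCubics]
  rcases hz with rfl | rfl | rfl | rfl | rfl
  · convert hcomb (x₂ ^ 2) 0 0 using 1; ring
  · convert hcomb 0 (x₁ ^ 2) 0 using 1; ring
  · convert hcomb 0 (-(x₁ * y₂ + x₂ * y₃)) (x₂ ^ 2) using 1; ring
  · convert hcomb (-(x₂ * y₁)) (-(x₁ * y₃)) (x₁ * x₂) using 1; ring
  · convert hcomb (-(x₁ * y₁ + x₂ * y₂)) 0 (x₁ ^ 2) using 1; ring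

end ThreeCubics

namespace MvPolynomial

variable {σ R : Type*} [CommSemiring R]

theorem X_pow_mem_span_monomial_image {i : σ} {k : ℕ} {s : Set (σ →₀ ℕ)}
    (h : Finsupp.single i k ∈ s) :
    X i ^ k ∈ span ((fun e => monomial e (1 : R)) '' s) := by
  rw [X_pow_eq_monomial]
  exact subset_span ⟨_, h, rfl⟩

theorem monomial_one_notMem_span_monomial_image [Nontrivial R] {d : σ →₀ ℕ} {s : Set (σ →₀ ℕ)}
    (hd : ∀ e ∈ s, ¬e ≤ d) :
    monomial d (1 : R) ∉ span ((fun e => monomial e (1 : R)) '' s) := by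
  classical
  rw [mem_ideal_span_monomial_image, support_monomial, if_neg one_ne_zero]
  simpa using hd

end MvPolynomial

open MvPolynomial

theorem threeCubics_le_span_monomial_image (R : Type*) [CommRing R] :
    threeCubics (X 0 : MvPolynomial (Fin 5) R) (X 1) (X 2) (X 3) (X 4) ≤
      span ((fun e => monomial e 1) ''
        {Finsupp.single 0 3, Finsupp.single 1 3, Finsupp.single 2 1, Finsupp.single 3 1,
          Finsupp.single 4 1}) := by
  refine span_le.mpr ?_
  rintro _ (rfl | rfl | rfl)
  · exact X_pow_mem_span_monomial_image (by simp)
  · exact X_pow_mem_span_monomial_image (by simp)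
  · refine add_mem (add_mem ?_ ?_) ?_ <;> exact mul_mem_left _ _ (subset_span ⟨_, by simp, rfl⟩)

open MvPolynomial in
/-- In `R = K[X₁,X₂,Y₁,Y₂,Y₃]` with
`I = (X₁³, X₂³, X₁²Y₁ + X₁X₂Y₂ + X₂²Y₃)`, the depth of `R/I` with respect to
the maximal graded ideal `m = (X₁,X₂,Y₁,Y₂,Y₃)` is zero: `R/I ≠ 0` and every
element of `m` is a zerodivisor on `R/I` (no element of `m` is a
nonzerodivisor on `R/I`). -/
theorem three_cubics_depth_zero (K : Type*) [Field K] :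
    let R := MvPolynomial (Fin 5) K
    let I : Ideal R := Ideal.span
      {X 0 ^ 3, X 1 ^ 3, X 0 ^ 2 * X 2 + X 0 * X 1 * X 3 + X 1 ^ 2 * X 4}
    Nontrivial (R ⧸ I) ∧
      ∀ r ∈ (Ideal.span (Set.range X) : Ideal R),
        ∃ t : R ⧸ I, t ≠ 0 ∧ r • t = 0 := by
  intro R I
  have hw : (X 0 ^ 2 * X 1 ^ 2 : R) = monomial (Finsupp.single 0 2 + Finsupp.single 1 2) 1 := by
    rw [X_pow_eq_monomial, X_pow_eq_monomial, monomial_mul, mul_one]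
  refine nontrivial_quotient_and_exists_smul_eq_zero_of_le_colon (w := X 0 ^ 2 * X 1 ^ 2) ?_ ?_
  · refine fun hI => monomial_one_notMem_span_monomial_image ?_
      (threeCubics_le_span_monomial_image K (hw ▸ hI))
    simp [Finsupp.single_le_iff]
  · refine (span_mono ?_).trans (span_le_threeCubics_colon (X 0) (X 1) (X 2) (X 3) (X 4))
    exact Set.range_subset_iff.mpr fun i => by fin_cases i <;> simp
end

section
/- Let K be a field, m ≥ 1, n ≥ 0, d ≥ 2 integers, p = M_{m,d-1} the number of monomials of degree d-1 in X_1,...,X_m, and R = K[X_1,...,X_m, Y_{1,1},...,Y_{p,n}]. Let Z_1,...,Z_p enumerate the degree-(d-1) monomials in X_1,...,X_m, and let I = ({X_i^d : 1 ≤ i ≤ m} ∪ {∑_{j=1}^p Z_j Y_{j,k} : 1 ≤ k ≤ n}). Set T = ∏_{i=1}^m X_i^{d-1}. Then T ∉ I. -/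
/-! Sending every `Y_{j,k}` to `0` kills the generators `∑_j Z_j Y_{j,k}` and maps `I` into the
monomial ideal `(X_1^d, …, X_m^d)`, while `T` maps to the monomial `X_1^(d-1) ⋯ X_m^(d-1)`,
which no `X_i^d` divides. -/

namespace MvPolynomial

variable {σ R : Type*} [CommSemiring R]

theorem monomial_one_mem_span_X_pow_iff [Nontrivial R] {n : ℕ} {e : σ →₀ ℕ} :
    monomial e (1 : R) ∈ Ideal.span (Set.range fun i : σ => (X i : MvPolynomial σ R) ^ n) ↔
      ∃ i, n ≤ e i := by
  classical
  have hrange : (Set.range fun i : σ => (X i : MvPolynomial σ R) ^ n) =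
      (fun s => monomial s (1 : R)) '' Set.range fun i => Finsupp.single i n := by
    simp_rw [X_pow_eq_monomial, ← Set.range_comp, Function.comp_def]
  rw [hrange, mem_ideal_span_monomial_image, support_monomial, if_neg one_ne_zero]
  simp [Finsupp.single_le_iff]

theorem prod_X_pow_eq_monomial_sum_single [Fintype σ] (k : ℕ) :
    ∏ i, (X i : MvPolynomial σ R) ^ k = monomial (∑ i, Finsupp.single i k) 1 := by
  simp_rw [X_pow_eq_monomial, monomial_sum_one]

theorem prod_X_pow_not_mem_span_X_pow [Fintype σ] [Nontrivial R] {k n : ℕ} (h : k < n) :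
    ∏ i, (X i : MvPolynomial σ R) ^ k ∉
      Ideal.span (Set.range fun i : σ => (X i : MvPolynomial σ R) ^ n) := by
  classical
  rw [prod_X_pow_eq_monomial_sum_single, monomial_one_mem_span_X_pow_iff]
  simp [Finsupp.finsetSum_apply, Finsupp.single_apply, h]

theorem prod_X_inl_pow_not_mem_span_X_inl_pow_sup [Fintype σ] [Nontrivial R] {τ : Type*}
    {k n : ℕ} (h : k < n) {J : Ideal (MvPolynomial (σ ⊕ τ) R)}
    (hJ : J ≤ Ideal.span (Set.range fun j : τ => X (Sum.inr j))) :
    ∏ i, (X (Sum.inl i) : MvPolynomial (σ ⊕ τ) R) ^ k ∉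
      Ideal.span (Set.range fun i : σ => (X (Sum.inl i) : MvPolynomial (σ ⊕ τ) R) ^ n) ⊔ J := by
  intro hmem
  let J₀ : Ideal (MvPolynomial σ R) := Ideal.span (Set.range fun i => X i ^ n)
  let killInr : MvPolynomial (σ ⊕ τ) R →ₐ[R] MvPolynomial σ R := aeval (Sum.elim X 0)
  have hle : Ideal.span (Set.range fun i : σ => (X (Sum.inl i) : MvPolynomial (σ ⊕ τ) R) ^ n) ⊔ J
      ≤ J₀.comap killInr := by
    refine sup_le (Ideal.span_le.mpr ?_) (hJ.trans (Ideal.span_le.mpr ?_))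
    · rintro _ ⟨i, rfl⟩
      simpa [killInr] using (Ideal.subset_span ⟨i, rfl⟩ : X i ^ n ∈ J₀)
    · rintro _ ⟨j, rfl⟩
      simp [killInr]
  exact prod_X_pow_not_mem_span_X_pow h (by simpa [killInr] using hle hmem)

end MvPolynomial

open MvPolynomial in
theorem T_not_mem_I_general (K : Type*) [Field K] (m n d p : ℕ)
    (hd : 2 ≤ d)
    (Z : Fin p → (Fin m →₀ ℕ)) :
    let R := MvPolynomial (Fin m ⊕ Fin p × Fin n) K
    let Zpoly : Fin p → R := fun j => monomial (Finsupp.mapDomain Sum.inl (Z j)) 1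
    let I : Ideal R := Ideal.span
      ((Set.range fun i : Fin m => (X (Sum.inl i) : R) ^ d) ∪
       (Set.range fun k : Fin n => ∑ j : Fin p, Zpoly j * X (Sum.inr (j, k))))
    (∏ i : Fin m, (X (Sum.inl i) : R) ^ (d - 1)) ∉ I := by
  dsimp only
  rw [Ideal.span_union]
  refine prod_X_inl_pow_not_mem_span_X_inl_pow_sup (by omega) (Ideal.span_le.mpr ?_)
  rintro _ ⟨k, rfl⟩
  exact Ideal.sum_mem _ fun j _ => Ideal.mul_mem_left _ _ (Ideal.subset_span ⟨(j, k), rfl⟩)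

open MvPolynomial in
/-- Paper's construction: `R = K[X₁,…,X_m, Y_{1,1},…,Y_{p,n}]` with
`p = M_{m,d-1} = C(m+d-2, d-1)`, `Z₁,…,Z_p` enumerating the degree-`(d-1)`
monomials in the `X` variables, and `I = I_{m,n,d}` generated by the `X_i^d`
together with `∑_j Z_j Y_{j,k}`.  Then `T = ∏ X_i^(d-1)` is not in `I`. -/
theorem T_not_mem_I (K : Type*) [Field K] (m n d p : ℕ)
    (hm : 1 ≤ m) (hd : 2 ≤ d) (hp : p = Nat.choose (m + d - 2) (d - 1))
    (Z : Fin p → (Fin m →₀ ℕ)) (hZinj : Function.Injective Z)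
    (hZdeg : ∀ j, ((Z j).sum fun _ k => k) = d - 1)
    (hZsurj : ∀ e : Fin m →₀ ℕ, (e.sum fun _ k => k) = d - 1 → ∃ j, Z j = e) :
    let R := MvPolynomial (Fin m ⊕ Fin p × Fin n) K
    let Zpoly : Fin p → R := fun j => monomial (Finsupp.mapDomain Sum.inl (Z j)) 1
    let I : Ideal R := Ideal.span
      ((Set.range fun i : Fin m => (X (Sum.inl i) : R) ^ d) ∪
       (Set.range fun k : Fin n => ∑ j : Fin p, Zpoly j * X (Sum.inr (j, k))))
    (∏ i : Fin m, (X (Sum.inl i) : R) ^ (d - 1)) ∉ I :=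
  T_not_mem_I_general K m n d p hd Z
end

section
/- Let K be a field, m ≥ 1, n ≥ 0, d ≥ 2, p = M_{m,d-1}, R = K[X_1,...,X_m, Y_{1,1},...,Y_{p,n}], Z_1,...,Z_p the degree-(d-1) monomials in X_1,...,X_m, and I = ({X_i^d} ∪ {∑_j Z_j Y_{j,k}}). Set T = ∏_{i=1}^m X_i^{d-1}. Then T·X_i ∈ I for every 1 ≤ i ≤ m and T·Y_{j,k} ∈ I for all 1 ≤ j ≤ p, 1 ≤ k ≤ n; hence the colon ideal (I : T) contains the maximal graded ideal. -/
/-!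
Write `Z_j` also for the exponent vector of the `j`-th monomial of degree `d - 1` and let
`S_j = ∏ X_i ^ (d - 1 - Z_j i)` be its complement, so that `S_j Z_j = T`. Clearly
`X_i ^ d ∣ T X_i`. For `q ≠ j`, the exponents `Z_j ≠ Z_q` have the same degree, so
`Z_j i < Z_q i` for some `i` and `X_i ^ d ∣ S_j Z_q`. Multiplying the generator
`∑_q Z_q Y_{q,k}` by `S_j` therefore gives `T Y_{j,k}` modulo `I`.
-/

open MvPolynomial

namespace Finsupp

variable {σ : Type*}

theorem degree_strictMono : StrictMono (degree : (σ →₀ ℕ) → ℕ) := by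
  intro f e hlt
  have hsplit : e = (e - f) + f := (tsub_add_cancel_of_le hlt.le).symm
  have hpos : 0 < degree (e - f) :=
    Nat.pos_of_ne_zero fun h => hlt.not_ge (tsub_eq_zero_iff_le.mp ((degree_eq_zero_iff _).mp h))
  rw [hsplit, map_add]
  omega

theorem exists_lt_of_degree_eq {e f : σ →₀ ℕ} (hdeg : degree e = degree f) (hne : e ≠ f) :
    ∃ i, e i < f i := by
  by_contra! hle
  exact (degree_strictMono (lt_of_le_of_ne (fun i => hle i) hne.symm)).ne hdeg.symm

end Finsupp

section ProdPow

variable {ι M : Type*} [Fintype ι] [CommMonoid M]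

theorem Finset.prod_pow_mul_prod_pow (x : ι → M) (a b : ι → ℕ) :
    (∏ i, x i ^ a i) * ∏ i, x i ^ b i = ∏ i, x i ^ (a i + b i) := by
  simp only [← Finset.prod_mul_distrib, pow_add]

theorem pow_dvd_prod_pow_of_le (x : ι → M) {e : ι → ℕ} {i : ι} {n : ℕ} (h : n ≤ e i) :
    x i ^ n ∣ ∏ j, x j ^ e j :=
  (pow_dvd_pow _ h).trans (Finset.dvd_prod_of_mem _ (Finset.mem_univ i))

end ProdPow

theorem MvPolynomial.monomial_mapDomain_one_eq_prod {R σ τ : Type*} [CommSemiring R] [Fintype σ]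
    (f : σ → τ) (e : σ →₀ ℕ) :
    (monomial (Finsupp.mapDomain f e) (1 : R) : MvPolynomial τ R) = ∏ i, X (f i) ^ e i := by
  rw [monomial_eq, map_one, one_mul,
    Finsupp.prod_mapDomain_index (by simp) (fun _ _ _ => pow_add _ _ _)]
  exact Finsupp.prod_fintype _ _ (by simp)

namespace Ideal

variable {A : Type*} [CommRing A] {I : Ideal A}

theorem mul_mul_mem_of_sum_mul_mem {ι : Type*} [Fintype ι] {z y : ι → A} {s : A}
    (j : ι) (hsum : ∑ q, z q * y q ∈ I) (hs : ∀ q ≠ j, s * z q ∈ I) : s * z j * y j ∈ I := by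
  classical
  have hsplit : s * z j * y j = s * ∑ q, z q * y q - ∑ q ∈ Finset.univ.erase j, s * z q * y q := by
    rw [Finset.mul_sum, ← Finset.add_sum_erase _ _ (Finset.mem_univ j)]
    simp only [mul_assoc, add_sub_cancel_right]
  rw [hsplit]
  exact sub_mem (mul_mem_left _ _ hsum) <| sum_mem _ fun q hq =>
    mul_mem_right _ _ (hs q (Finset.ne_of_mem_erase hq))

theorem span_le_colon_span_singleton {s : Set A} {t : A} (h : ∀ a ∈ s, t * a ∈ I) :
    span s ≤ I.colon (span {t}) := by
  rw [span_le]
  intro a ha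
  rw [SetLike.mem_coe, Submodule.mem_colon_span_singleton, smul_eq_mul, mul_comm]
  exact h a ha

end Ideal

open MvPolynomial in
theorem colon_contains_max_general (K : Type*) [Field K] (m n d p : ℕ)
    (hd : 2 ≤ d)
    (Z : Fin p → (Fin m →₀ ℕ)) (hZinj : Function.Injective Z)
    (hZdeg : ∀ j, ((Z j).sum fun _ k => k) = d - 1) :
    let R := MvPolynomial (Fin m ⊕ Fin p × Fin n) K
    let Zpoly : Fin p → R := fun j => monomial (Finsupp.mapDomain Sum.inl (Z j)) 1
    let I : Ideal R := Ideal.span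
      ((Set.range fun i : Fin m => (X (Sum.inl i) : R) ^ d) ∪
       (Set.range fun k : Fin n => ∑ j : Fin p, Zpoly j * X (Sum.inr (j, k))))
    let T : R := ∏ i : Fin m, (X (Sum.inl i) : R) ^ (d - 1)
    (∀ i : Fin m, T * X (Sum.inl i) ∈ I) ∧
    (∀ (j : Fin p) (k : Fin n), T * X (Sum.inr (j, k)) ∈ I) ∧
    Ideal.span (Set.range (X : Fin m ⊕ Fin p × Fin n → R)) ≤
      Submodule.colon I (Ideal.span {T}) := by
  intro R Zpoly I T
  have hZpoly (j : Fin p) : Zpoly j = ∏ i, X (Sum.inl i) ^ Z j i :=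
    monomial_mapDomain_one_eq_prod _ _
  have hZle (j : Fin p) (i : Fin m) : Z j i ≤ d - 1 := hZdeg j ▸ Finsupp.le_degree i (Z j)
  have hXd (i : Fin m) : (X (Sum.inl i) : R) ^ d ∈ I := Ideal.subset_span (Or.inl ⟨i, rfl⟩)
  have hTX (i : Fin m) : T * X (Sum.inl i) ∈ I := by
    refine I.mem_of_dvd ?_ (hXd i)
    rw [← pow_sub_one_mul (by omega : d ≠ 0)]
    exact mul_dvd_mul (pow_dvd_prod_pow_of_le _ le_rfl) dvd_rfl
  have hTY (j : Fin p) (k : Fin n) : T * X (Sum.inr (j, k)) ∈ I := by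
    have hSZ (q : Fin p) : (∏ i, X (Sum.inl i) ^ (d - 1 - Z j i)) * Zpoly q =
        ∏ i, (X (Sum.inl i) : R) ^ (d - 1 - Z j i + Z q i) := by
      rw [hZpoly, Finset.prod_pow_mul_prod_pow]
    have hST : (∏ i, X (Sum.inl i) ^ (d - 1 - Z j i)) * Zpoly j = T := by
      rw [hSZ]
      exact Finset.prod_congr rfl fun i _ => by rw [Nat.sub_add_cancel (hZle j i)]
    rw [← hST]
    have hgen : ∑ q, Zpoly q * X (Sum.inr (q, k)) ∈ I := Ideal.subset_span (Or.inr ⟨k, rfl⟩)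
    refine Ideal.mul_mul_mem_of_sum_mul_mem (y := fun q => X (Sum.inr (q, k))) j hgen
      fun q hq => ?_
    obtain ⟨i, hi⟩ :=
      Finsupp.exists_lt_of_degree_eq ((hZdeg j).trans (hZdeg q).symm) (hZinj.ne hq.symm)
    rw [hSZ]
    exact I.mem_of_dvd (pow_dvd_prod_pow_of_le _ (by have := hZle j i; omega)) (hXd i)
  refine ⟨hTX, hTY, Ideal.span_le_colon_span_singleton ?_⟩
  rintro _ ⟨v | ⟨j, k⟩, rfl⟩
  exacts [hTX v, hTY j k]

open MvPolynomial in
/-- Paper's core computation: with `R`, `I = I_{m,n,d}` as in the construction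
and `T = ∏ X_i^(d-1)`, we have `T·X_i ∈ I` for all `i`, `T·Y_{j,k} ∈ I` for
all `j, k`; hence the colon ideal `(I : T)` contains the maximal graded
ideal generated by all the variables. -/
theorem colon_contains_max (K : Type*) [Field K] (m n d p : ℕ)
    (hm : 1 ≤ m) (hd : 2 ≤ d) (hp : p = Nat.choose (m + d - 2) (d - 1))
    (Z : Fin p → (Fin m →₀ ℕ)) (hZinj : Function.Injective Z)
    (hZdeg : ∀ j, ((Z j).sum fun _ k => k) = d - 1)
    (hZsurj : ∀ e : Fin m →₀ ℕ, (e.sum fun _ k => k) = d - 1 → ∃ j, Z j = e) :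
    let R := MvPolynomial (Fin m ⊕ Fin p × Fin n) K
    let Zpoly : Fin p → R := fun j => monomial (Finsupp.mapDomain Sum.inl (Z j)) 1
    let I : Ideal R := Ideal.span
      ((Set.range fun i : Fin m => (X (Sum.inl i) : R) ^ d) ∪
       (Set.range fun k : Fin n => ∑ j : Fin p, Zpoly j * X (Sum.inr (j, k))))
    let T : R := ∏ i : Fin m, (X (Sum.inl i) : R) ^ (d - 1)
    (∀ i : Fin m, T * X (Sum.inl i) ∈ I) ∧
    (∀ (j : Fin p) (k : Fin n), T * X (Sum.inr (j, k)) ∈ I) ∧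
    Ideal.span (Set.range (X : Fin m ⊕ Fin p × Fin n → R)) ≤
      Submodule.colon I (Ideal.span {T}) :=
  colon_contains_max_general K m n d p hd Z hZinj hZdeg
end

section
/- Let K be a field, m ≥ 1, n ≥ 0, d ≥ 2, p = M_{m,d-1}, and let R and I = I_{m,n,d} be as in the paper's construction. Then the graded maximal ideal m of R (generated by all m + pn variables) is an associated prime of R/I. -/
/-!
The witness is the monomial `t = ∏ X_i^(d-1)`. It is not in `I`, since `I` lies in the monomial
ideal `(X_1^d, …, X_m^d, Y_{1,1}, …, Y_{p,n})`. Each `X_i t` is a multiple of `X_i^d`. For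
`Y_{j,k}`, write `t = W Z_j` with the monomial `W = t / Z_j`; multiplying the `k`-th generator
`∑_{j'} Z_{j'} Y_{j',k}` by `W` gives `Y_{j,k} t` plus terms `W Z_{j'} Y_{j',k}` with `j' ≠ j`,
and each `W Z_{j'}` is in `I`: as `Z_{j'} ≠ Z_j` have the same degree, `Z_{j'}` exceeds `Z_j` in
some variable `X_i`, and there `W Z_{j'}` has exponent at least `d`. So the annihilator of `t`
in `R/I` is a proper ideal containing the maximal ideal of the variables, hence equal to it.
-/

open MvPolynomial

theorem isAssociatedPrime_of_le_colon {R M : Type*} [CommSemiring R] [AddCommMonoid M]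
    [Module R M] {P : Ideal R} [hP : P.IsMaximal] {x : M} (hx : x ≠ 0)
    (hPx : P ≤ (⊥ : Submodule R M).colon {x}) : IsAssociatedPrime P M := by
  have hne : (⊥ : Submodule R M).colon {x} ≠ ⊤ := by
    rw [Ne, Submodule.colon_eq_top_iff_subset, Set.singleton_subset_iff]
    exact hx
  refine ⟨hP.isPrime, x, ?_⟩
  rw [← hP.eq_of_le hne hPx, hP.isPrime.radical]

theorem isAssociatedPrime_quotient_of_le_colon {R : Type*} [CommRing R] {I P : Ideal R}
    [P.IsMaximal] {t : R} (ht : t ∉ I) (hPt : P ≤ I.colon {t}) : IsAssociatedPrime P (R ⧸ I) := by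
  refine isAssociatedPrime_of_le_colon (x := Ideal.Quotient.mk I t)
    (Ideal.Quotient.eq_zero_iff_mem.not.mpr ht) fun r hr => ?_
  rw [Submodule.mem_colon_singleton, Submodule.mem_bot, Algebra.smul_def,
    Ideal.Quotient.algebraMap_eq, ← map_mul, Ideal.Quotient.eq_zero_iff_mem]
  exact Submodule.mem_colon_singleton.mp (hPt hr)

theorem Ideal.mul_mem_of_sum_mul_mem {R ι : Type*} [CommRing R] [DecidableEq ι] {I : Ideal R}
    {s : Finset ι} {f g : ι → R} {w : R} {j : ι} (hj : j ∈ s)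
    (hsum : ∑ i ∈ s, f i * g i ∈ I) (hw : ∀ i ∈ s, i ≠ j → w * f i ∈ I) :
    w * f j * g j ∈ I := by
  have hrest : ∑ i ∈ s.erase j, w * f i * g i ∈ I := Ideal.sum_mem _ fun i hi =>
    Ideal.mul_mem_right _ _ (hw i (Finset.mem_of_mem_erase hi) (Finset.ne_of_mem_erase hi))
  refine (Ideal.add_mem_iff_left I hrest).mp ?_
  rw [Finset.add_sum_erase s (fun i => w * f i * g i) hj]
  simpa only [Finset.mul_sum, mul_assoc] using Ideal.mul_mem_left _ w hsum

theorem Finsupp.exists_lt_of_degree_eq_of_ne {σ : Type*} {a b : σ →₀ ℕ}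
    (h : a.degree = b.degree) (hne : a ≠ b) : ∃ i, a i < b i := by
  by_contra! hba
  have hdeg : (a - b).degree = 0 := by
    have := map_add degree b (a - b)
    rw [add_tsub_cancel_of_le hba, h] at this
    omega
  rw [degree_eq_zero_iff, tsub_eq_zero_iff_le] at hdeg
  exact hne (le_antisymm hdeg hba)

namespace MvPolynomial

variable {σ R : Type*} [CommSemiring R]

instance isMaximal_idealOfVars {K : Type*} [Field K] : (idealOfVars σ K).IsMaximal := by
  rw [idealOfVars_eq_ker_constantCoeff]
  exact RingHom.ker_isMaximal_of_surjective _ fun a => ⟨C a, constantCoeff_C σ a⟩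

theorem monomial_mem_of_X_pow_mem {I : Ideal (MvPolynomial σ R)} {i : σ} {k : ℕ}
    {e : σ →₀ ℕ} (hX : X i ^ k ∈ I) (he : k ≤ e i) (a : R) : monomial e a ∈ I := by
  have hle : Finsupp.single i k ≤ e := Finsupp.single_le_iff.mpr he
  rw [← add_tsub_cancel_of_le hle, ← one_mul a, ← monomial_mul, ← X_pow_eq_monomial]
  exact Ideal.mul_mem_right _ _ hX

theorem monomial_one_mem_span_monomial_iff [Nontrivial R] {s : Set (σ →₀ ℕ)} {e : σ →₀ ℕ} :
    monomial e (1 : R) ∈ Ideal.span ((fun s => monomial s (1 : R)) '' s) ↔ ∃ x ∈ s, x ≤ e := by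
  classical
  rw [mem_ideal_span_monomial_image, support_monomial, if_neg one_ne_zero]
  simp only [Finset.mem_singleton, forall_eq]

end MvPolynomial

section Construction

open Finsupp (mapDomain mapDomain_apply)

variable {σ ι κ R : Type*} [CommRing R] {d : ℕ} {c : σ →₀ ℕ} {Z : ι → σ →₀ ℕ}
  {I : Ideal (MvPolynomial (σ ⊕ ι × κ) R)}

theorem X_inl_mul_monomial_mem {i : σ} (hX : X (.inl i) ^ d ∈ I) (hc : d ≤ c i + 1) :
    X (.inl i) * monomial (mapDomain Sum.inl c) (1 : R) ∈ I := by
  rw [← pow_one (X _), ← monomial_single_add]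
  refine monomial_mem_of_X_pow_mem hX ?_ 1
  simpa [mapDomain_apply Sum.inl_injective, add_comm] using hc

theorem X_inr_mul_monomial_mem [Fintype ι] (hX : ∀ i, X (.inl i) ^ d ∈ I)
    (hY : ∀ k, ∑ j, monomial (mapDomain Sum.inl (Z j)) 1 * X (.inr (j, k)) ∈ I)
    (hc : ∀ i, c i + 1 = d) (hZinj : Function.Injective Z) (hZdeg : ∀ j, (Z j).degree = d - 1)
    (j : ι) (k : κ) : X (.inr (j, k)) * monomial (mapDomain Sum.inl c) (1 : R) ∈ I := by
  classical
  have hZc : ∀ j, Z j ≤ c := fun j i => by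
    have := Finsupp.le_degree i (Z j)
    have := hc i
    have := hZdeg j
    omega
  set W : MvPolynomial (σ ⊕ ι × κ) R := monomial (mapDomain Sum.inl (c - Z j)) 1
  have hWZ : ∀ j', W * monomial (mapDomain Sum.inl (Z j')) 1
      = monomial (mapDomain Sum.inl (c - Z j + Z j')) 1 := fun j' => by
    rw [monomial_mul, one_mul, Finsupp.mapDomain_add]
  have hWZj : W * monomial (mapDomain Sum.inl (Z j)) 1 = monomial (mapDomain Sum.inl c) 1 := by
    rw [hWZ, tsub_add_cancel_of_le (hZc j)]
  have hWZ_mem : ∀ j' ∈ Finset.univ, j' ≠ j → W * monomial (mapDomain Sum.inl (Z j')) 1 ∈ I := by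
    intro j' _ hj'
    obtain ⟨i, hi⟩ := Finsupp.exists_lt_of_degree_eq_of_ne ((hZdeg j).trans (hZdeg j').symm)
      (hZinj.ne hj'.symm)
    rw [hWZ]
    refine monomial_mem_of_X_pow_mem (hX i) ?_ 1
    have := hc i
    have := hZc j i
    simp only [mapDomain_apply Sum.inl_injective, Finsupp.coe_add, Finsupp.coe_tsub, Pi.add_apply,
      Pi.sub_apply]
    omega
  have := Ideal.mul_mem_of_sum_mul_mem (Finset.mem_univ j) (hY k) hWZ_mem
  rwa [hWZj, mul_comm] at this

theorem monomial_inl_notMem_span [Nontrivial R] [Fintype ι] (hc : ∀ i, c i < d) :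
    monomial (mapDomain Sum.inl c) (1 : R) ∉ Ideal.span
      ((Set.range fun i : σ => (X (.inl i) : MvPolynomial (σ ⊕ ι × κ) R) ^ d) ∪
       (Set.range fun k : κ => ∑ j : ι, monomial (mapDomain Sum.inl (Z j)) 1 * X (.inr (j, k)))) := by
  set S : Set (σ ⊕ ι × κ →₀ ℕ) :=
    Set.range (fun i => Finsupp.single (.inl i) d) ∪ Set.range (fun y => Finsupp.single (.inr y) 1)
  intro h
  have hS : monomial (mapDomain Sum.inl c) (1 : R) ∈ Ideal.span ((monomial · 1) '' S) := by
    refine Ideal.span_le.mpr ?_ h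
    rintro _ (⟨i, rfl⟩ | ⟨k, rfl⟩)
    · exact Ideal.subset_span ⟨_, Or.inl ⟨i, rfl⟩, X_pow_eq_monomial.symm⟩
    · exact Ideal.sum_mem _ fun j _ =>
        Ideal.mul_mem_left _ _ (Ideal.subset_span ⟨_, Or.inr ⟨(j, k), rfl⟩, rfl⟩)
  obtain ⟨x, hx, hxc⟩ := monomial_one_mem_span_monomial_iff.mp hS
  rcases hx with ⟨i, rfl⟩ | ⟨y, rfl⟩
  · have := Finsupp.single_le_iff.mp hxc
    rw [mapDomain_apply Sum.inl_injective] at this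
    exact (hc i).not_ge this
  · have := Finsupp.single_le_iff.mp hxc
    rw [Finsupp.mapDomain_of_notMem_range _ _ (by simp)] at this
    exact Nat.not_succ_le_zero 0 this

end Construction

open MvPolynomial in
theorem max_ideal_assoc_prime_general (K : Type*) [Field K] (m n d p : ℕ)
    (hd : 2 ≤ d)
    (Z : Fin p → (Fin m →₀ ℕ)) (hZinj : Function.Injective Z)
    (hZdeg : ∀ j, ((Z j).sum fun _ k => k) = d - 1) :
    let R := MvPolynomial (Fin m ⊕ Fin p × Fin n) K
    let Zpoly : Fin p → R := fun j => monomial (Finsupp.mapDomain Sum.inl (Z j)) 1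
    let I : Ideal R := Ideal.span
      ((Set.range fun i : Fin m => (X (Sum.inl i) : R) ^ d) ∪
       (Set.range fun k : Fin n => ∑ j : Fin p, Zpoly j * X (Sum.inr (j, k))))
    IsAssociatedPrime (Ideal.span (Set.range (X : Fin m ⊕ Fin p × Fin n → R)))
      (R ⧸ I) := by
  intro R Zpoly I
  set c : Fin m →₀ ℕ := Finsupp.equivFunOnFinite.symm fun _ => d - 1
  have hc : ∀ i, c i + 1 = d := fun i => by simp only [c, Finsupp.coe_equivFunOnFinite_symm]; omega
  have hX : ∀ i, (X (Sum.inl i) : R) ^ d ∈ I := fun i => Ideal.subset_span (Or.inl ⟨i, rfl⟩)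
  have hY : ∀ k, ∑ j, Zpoly j * X (Sum.inr (j, k)) ∈ I := fun k =>
    Ideal.subset_span (Or.inr ⟨k, rfl⟩)
  refine isAssociatedPrime_quotient_of_le_colon (P := idealOfVars _ K)
    (monomial_inl_notMem_span (c := c) fun i => Nat.lt_of_succ_le (hc i).le) ?_
  rw [Ideal.span_le]
  rintro _ ⟨i | ⟨j, k⟩, rfl⟩ <;> rw [SetLike.mem_coe, Submodule.mem_colon_singleton, smul_eq_mul]
  · exact X_inl_mul_monomial_mem (hX i) (hc i).ge
  · exact X_inr_mul_monomial_mem hX hY hc hZinj hZdeg j k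

open MvPolynomial in
/-- With `R` and `I = I_{m,n,d}` as in the paper's construction, the graded
maximal ideal of `R` (generated by all `m + pn` variables) is an associated
prime of `R/I`. -/
theorem max_ideal_assoc_prime (K : Type*) [Field K] (m n d p : ℕ)
    (hm : 1 ≤ m) (hd : 2 ≤ d) (hp : p = Nat.choose (m + d - 2) (d - 1))
    (Z : Fin p → (Fin m →₀ ℕ)) (hZinj : Function.Injective Z)
    (hZdeg : ∀ j, ((Z j).sum fun _ k => k) = d - 1)
    (hZsurj : ∀ e : Fin m →₀ ℕ, (e.sum fun _ k => k) = d - 1 → ∃ j, Z j = e) :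
    let R := MvPolynomial (Fin m ⊕ Fin p × Fin n) K
    let Zpoly : Fin p → R := fun j => monomial (Finsupp.mapDomain Sum.inl (Z j)) 1
    let I : Ideal R := Ideal.span
      ((Set.range fun i : Fin m => (X (Sum.inl i) : R) ^ d) ∪
       (Set.range fun k : Fin n => ∑ j : Fin p, Zpoly j * X (Sum.inr (j, k))))
    IsAssociatedPrime (Ideal.span (Set.range (X : Fin m ⊕ Fin p × Fin n → R)))
      (R ⧸ I) :=
  max_ideal_assoc_prime_general K m n d p hd Z hZinj hZdeg
end
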